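/- (Tetali's hitting time formula) For a reversible Markov chain on a finite state space with conductances c_{x,y} = μ(x)p(x,y) (where μ(x)p(x,y) = μ(y)p(y,x)), the expected hitting time satisfies E_v(τ_z) = (1/2) ∑_{u∈V} μ(u)·[R(v ↔ z) + R(z ↔ u) − R(u ↔ v)]. -/

import Mathlib

/-- Dirichlet energy of `f` for the electrical network with edge conductances
`c x y = μ x * p x y` associated to a reversible chain. -/
noncomputable def chainEnergy {V : Type*} [Fintype V]
    (p : V → V → ℝ) (μ : V → ℝ) (f : V → ℝ) : ℝ :=
  (1 / 2) * ∑ x, ∑ y, μ x * p x y * (f x - f y) ^ 2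

/-- Effective resistance between `x` and `y` in the network with conductances
`c x y = μ x * p x y`, defined via the Dirichlet variational principle. -/
noncomputable def chainEffRes {V : Type*} [Fintype V]
    (p : V → V → ℝ) (μ : V → ℝ) (x y : V) : ℝ :=
  (sInf (chainEnergy p μ '' {f : V → ℝ | f x = 1 ∧ f y = 0}))⁻¹

namespace TetaliAux

set_option linter.unusedSectionVars false
set_option maxHeartbeats 1000000

variable {V : Type*} [Fintype V] [DecidableEq V]

/-- The (weighted) graph Laplacian of the chain. -/
noncomputable def lap (p : V → V → ℝ) (μ : V → ℝ) (f : V → ℝ) (x : V) : ℝ :=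
  μ x * (f x - ∑ y, p x y * f y)

variable {p : V → V → ℝ} {μ : V → ℝ}

lemma colsum (hrow : ∀ x, ∑ y, p x y = 1)
    (hrev : ∀ x y, μ x * p x y = μ y * p y x) (y : V) :
    ∑ x, μ x * p x y = μ y := by
  calc ∑ x, μ x * p x y = ∑ x, μ y * p y x :=
        Finset.sum_congr rfl fun x _ => hrev x y
    _ = μ y * ∑ x, p y x := by rw [Finset.mul_sum]
    _ = μ y := by rw [hrow, mul_one]

lemma lap_expand (f g : V → ℝ) :
    ∑ x, f x * lap p μ g x
      = ∑ x, μ x * (f x * g x) - ∑ x, ∑ y, μ x * p x y * (f x * g y) := by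
  rw [← Finset.sum_sub_distrib]
  refine Finset.sum_congr rfl fun x _ => ?_
  have : f x * (μ x * ∑ y, p x y * g y) = ∑ y, μ x * p x y * (f x * g y) := by
    rw [Finset.mul_sum, Finset.mul_sum]
    exact Finset.sum_congr rfl fun y _ => by ring
  rw [lap, ← this]; ring

lemma lap_symm (hrev : ∀ x y, μ x * p x y = μ y * p y x) (f g : V → ℝ) :
    ∑ x, f x * lap p μ g x = ∑ x, g x * lap p μ f x := by
  rw [lap_expand, lap_expand]
  have hA : ∑ x, μ x * (f x * g x) = ∑ x, μ x * (g x * f x) :=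
    Finset.sum_congr rfl fun x _ => by ring
  rw [hA]
  congr 1
  calc ∑ x, ∑ y, μ x * p x y * (f x * g y)
      = ∑ x, ∑ y, μ y * p y x * (f x * g y) :=
        Finset.sum_congr rfl fun x _ => Finset.sum_congr rfl fun y _ => by rw [hrev]
    _ = ∑ y, ∑ x, μ y * p y x * (f x * g y) := Finset.sum_comm
    _ = ∑ x, ∑ y, μ x * p x y * (g x * f y) :=
        Finset.sum_congr rfl fun y _ => Finset.sum_congr rfl fun x _ => by ring

lemma energy_eq (hrow : ∀ x, ∑ y, p x y = 1)
    (hrev : ∀ x y, μ x * p x y = μ y * p y x) (f : V → ℝ) :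
    chainEnergy p μ f = ∑ x, f x * lap p μ f x := by
  have e1 : ∑ x, ∑ y, μ x * p x y * (f x - f y) ^ 2
      = ∑ x, ∑ y, (μ x * p x y * f x ^ 2 - 2 * (μ x * p x y * (f x * f y))
          + μ x * p x y * f y ^ 2) :=
    Finset.sum_congr rfl fun x _ => Finset.sum_congr rfl fun y _ => by ring
  have e2 : ∑ x, ∑ y, μ x * p x y * f x ^ 2 = ∑ x, μ x * (f x * f x) := by
    refine Finset.sum_congr rfl fun x _ => ?_
    have h : ∀ y, μ x * p x y * f x ^ 2 = p x y * (μ x * (f x * f x)) := fun y => by ring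
    simp_rw [h]
    rw [← Finset.sum_mul, hrow, one_mul]
  have e3 : ∑ x, ∑ y, μ x * p x y * f y ^ 2 = ∑ x, μ x * (f x * f x) := by
    rw [Finset.sum_comm]
    refine Finset.sum_congr rfl fun y _ => ?_
    have h : ∀ x, μ x * p x y * f y ^ 2 = μ x * p x y * (f y * f y) := fun x => by ring
    simp_rw [h]
    rw [← Finset.sum_mul, colsum hrow hrev]
  have e4 : ∑ x, ∑ y, (μ x * p x y * f x ^ 2 - 2 * (μ x * p x y * (f x * f y))
          + μ x * p x y * f y ^ 2)
      = (∑ x, ∑ y, μ x * p x y * f x ^ 2)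
        - 2 * (∑ x, ∑ y, μ x * p x y * (f x * f y))
        + ∑ x, ∑ y, μ x * p x y * f y ^ 2 := by
    simp_rw [Finset.sum_add_distrib, Finset.sum_sub_distrib, ← Finset.mul_sum]
  rw [chainEnergy, lap_expand, e1, e4, e2, e3]
  ring

lemma energy_nonneg (hnn : ∀ x y, 0 ≤ p x y) (hμpos : ∀ x, 0 < μ x) (f : V → ℝ) :
    0 ≤ chainEnergy p μ f := by
  apply mul_nonneg (by norm_num)
  refine Finset.sum_nonneg fun x _ => Finset.sum_nonneg fun y _ => ?_
  exact mul_nonneg (mul_nonneg (hμpos x).le (hnn x y)) (sq_nonneg _)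

lemma edge_eq (hnn : ∀ x y, 0 ≤ p x y) (hμpos : ∀ x, 0 < μ x) (f : V → ℝ)
    (hE : chainEnergy p μ f = 0) {x y : V} (hp : 0 < p x y) : f x = f y := by
  have hsum : ∑ x, ∑ y, μ x * p x y * (f x - f y) ^ 2 = 0 := by
    have := hE
    rw [chainEnergy] at this
    linarith
  have hterm : μ x * p x y * (f x - f y) ^ 2 = 0 := by
    have h1 := (Finset.sum_eq_zero_iff_of_nonneg (fun x _ =>
      Finset.sum_nonneg fun y _ =>
        mul_nonneg (mul_nonneg (hμpos x).le (hnn x y)) (sq_nonneg _))).mp hsum x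
        (Finset.mem_univ x)
    exact (Finset.sum_eq_zero_iff_of_nonneg (fun y _ =>
      mul_nonneg (mul_nonneg (hμpos x).le (hnn x y)) (sq_nonneg _))).mp h1 y
        (Finset.mem_univ y)
  have hc : 0 < μ x * p x y := mul_pos (hμpos x) hp
  have hsq : (f x - f y) ^ 2 = 0 := by
    rcases mul_eq_zero.mp hterm with h | h
    · exact absurd h hc.ne'
    · exact h
  have := pow_eq_zero_iff (n := 2) (by norm_num) |>.mp hsq
  linarith [sub_eq_zero.mp this]

lemma pow_nonneg' (hnn : ∀ x y, 0 ≤ p x y) :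
    ∀ (t : ℕ) (x y : V), 0 ≤ ((Matrix.of p) ^ t) x y := by
  intro t
  induction t with
  | zero =>
    intro x y
    rw [pow_zero]
    rcases eq_or_ne x y with h | h
    · simp [Matrix.one_apply, h]
    · simp [Matrix.one_apply, h]
  | succ t ih =>
    intro x y
    rw [pow_succ, Matrix.mul_apply]
    exact Finset.sum_nonneg fun w _ => mul_nonneg (ih x w) (hnn w y)

lemma const_of_energy_zero (hnn : ∀ x y, 0 ≤ p x y) (hμpos : ∀ x, 0 < μ x)
    (hirr : ∀ x y, ∃ t : ℕ, 0 < ((Matrix.of p) ^ t) x y)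
    (f : V → ℝ) (hE : chainEnergy p μ f = 0) : ∀ x y, f x = f y := by
  have key : ∀ (t : ℕ) (x y : V), 0 < ((Matrix.of p) ^ t) x y → f x = f y := by
    intro t
    induction t with
    | zero =>
      intro x y h0
      rw [pow_zero, Matrix.one_apply] at h0
      by_cases h : x = y
      · rw [h]
      · simp [h] at h0
    | succ t ih =>
      intro x y h0
      rw [pow_succ', Matrix.mul_apply] at h0
      have hpos : ∑ w : V, (0:ℝ) < ∑ w, Matrix.of p x w * ((Matrix.of p) ^ t) w y := by
        simpa using h0
      obtain ⟨w, -, hw⟩ := Finset.exists_lt_of_sum_lt hpos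
      have h1 : 0 < Matrix.of p x w := by
        rcases mul_pos_iff.mp hw with ⟨ha, _⟩ | ⟨ha, hb⟩
        · exact ha
        · exact absurd hb (not_lt.mpr (pow_nonneg' hnn t w y))
      have h2 : 0 < ((Matrix.of p) ^ t) w y := by
        rcases mul_pos_iff.mp hw with ⟨_, hb⟩ | ⟨ha, _⟩
        · exact hb
        · exact absurd ha (not_lt.mpr (hnn x w))
      exact (edge_eq hnn hμpos f hE (x := x) (y := w) h1).trans (ih w y h2)
  intro x y
  obtain ⟨t, ht⟩ := hirr x y
  exact key t x y ht

lemma lap_add (f g : V → ℝ) (x : V) :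
    lap p μ (fun u => f u + g u) x = lap p μ f x + lap p μ g x := by
  simp only [lap, mul_add, Finset.sum_add_distrib]
  ring

lemma lap_smul (c : ℝ) (f : V → ℝ) (x : V) :
    lap p μ (fun u => c * f u) x = c * lap p μ f x := by
  simp only [lap]
  have : ∑ y, p x y * (c * f y) = c * ∑ y, p x y * f y := by
    rw [Finset.mul_sum]; exact Finset.sum_congr rfl fun y _ => by ring
  rw [this]; ring

lemma lap_sub_const (hrow : ∀ x, ∑ y, p x y = 1) (w : V → ℝ) (c : ℝ) (x : V) :
    lap p μ (fun u => w u - c) x = lap p μ w x := by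
  simp only [lap]
  have : ∑ y, p x y * (w y - c) = (∑ y, p x y * w y) - c := by
    simp only [mul_sub]
    rw [Finset.sum_sub_distrib, ← Finset.sum_mul, hrow, one_mul]
  rw [this]; ring

lemma lap_const (hrow : ∀ x, ∑ y, p x y = 1) (c : ℝ) (x : V) :
    lap p μ (fun _ => c) x = 0 := by
  simp only [lap]
  rw [← Finset.sum_mul, hrow, one_mul, sub_self, mul_zero]

lemma sum_lap (hrow : ∀ x, ∑ y, p x y = 1)
    (hrev : ∀ x y, μ x * p x y = μ y * p y x) (f : V → ℝ) :
    ∑ x, lap p μ f x = 0 := by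
  simp only [lap, mul_sub]
  rw [Finset.sum_sub_distrib]
  have h1 : ∑ x, μ x * ∑ y, p x y * f y = ∑ x, ∑ y, μ x * p x y * f y := by
    refine Finset.sum_congr rfl fun x _ => ?_
    rw [Finset.mul_sum]; exact Finset.sum_congr rfl fun y _ => by ring
  rw [h1, Finset.sum_comm]
  have h2 : ∀ y : V, ∑ x, μ x * p x y * f y = μ y * f y := by
    intro y
    rw [← Finset.sum_mul]
    congr 1
    exact colsum hrow hrev y
  simp_rw [h2]
  rw [sub_self]

lemma lap_weighted_sum (c : V → ℝ) (F : V → V → ℝ) (x : V) :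
    lap p μ (fun v => ∑ u, c u * F u v) x = ∑ u, c u * lap p μ (F u) x := by
  simp only [lap]
  have h1 : ∑ y, p x y * ∑ u, c u * F u y = ∑ u, c u * ∑ y, p x y * F u y := by
    simp_rw [Finset.mul_sum]
    rw [Finset.sum_comm]
    exact Finset.sum_congr rfl fun u _ => Finset.sum_congr rfl fun y _ => by ring
  rw [h1, ← Finset.sum_sub_distrib, Finset.mul_sum]
  exact Finset.sum_congr rfl fun u _ => by ring

lemma const_of_lap_zero (hnn : ∀ x y, 0 ≤ p x y) (hrow : ∀ x, ∑ y, p x y = 1)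
    (hμpos : ∀ x, 0 < μ x) (hrev : ∀ x y, μ x * p x y = μ y * p y x)
    (hirr : ∀ x y, ∃ t : ℕ, 0 < ((Matrix.of p) ^ t) x y)
    (f : V → ℝ) (hz : ∀ x, lap p μ f x = 0) : ∀ x y, f x = f y := by
  refine const_of_energy_zero hnn hμpos hirr f ?_
  rw [energy_eq hrow hrev]
  apply Finset.sum_eq_zero
  intro x _
  rw [hz x, mul_zero]

lemma lap_surj [Nonempty V] (hnn : ∀ x y, 0 ≤ p x y) (hrow : ∀ x, ∑ y, p x y = 1)
    (hμpos : ∀ x, 0 < μ x) (hrev : ∀ x y, μ x * p x y = μ y * p y x)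
    (hirr : ∀ x y, ∃ t : ℕ, 0 < ((Matrix.of p) ^ t) x y)
    (b : V → ℝ) (hb : ∑ x, b x = 0) :
    ∃ w : V → ℝ, ∀ x, lap p μ w x = b x := by
  classical
  let L : (V → ℝ) →ₗ[ℝ] (V → ℝ) :=
    { toFun := fun f => lap p μ f
      map_add' := fun f g => funext fun x => lap_add f g x
      map_smul' := fun c f => funext fun x => by
        simpa [Pi.smul_def] using lap_smul c f x }
  let S : (V → ℝ) →ₗ[ℝ] ℝ :=
    { toFun := fun f => ∑ x, f x
      map_add' := fun f g => by simp [Finset.sum_add_distrib]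
      map_smul' := fun c f => by simp [Finset.mul_sum] }
  have hker : LinearMap.ker L = Submodule.span ℝ {fun _ : V => (1:ℝ)} := by
    apply le_antisymm
    · intro f hf
      rw [LinearMap.mem_ker] at hf
      have hz : ∀ x, lap p μ f x = 0 := fun x => congrFun hf x
      have hc := const_of_lap_zero hnn hrow hμpos hrev hirr f hz
      obtain x0 := Classical.arbitrary V
      have hfe : f = (f x0) • (fun _ : V => (1:ℝ)) := funext fun x => by
        simp [hc x x0]
      rw [hfe]
      exact Submodule.smul_mem _ _ (Submodule.mem_span_singleton_self _)
    · rw [Submodule.span_le]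
      intro q hq
      rw [Set.mem_singleton_iff] at hq
      subst hq
      rw [SetLike.mem_coe, LinearMap.mem_ker]
      exact funext fun x => lap_const hrow 1 x
  have hone : (fun _ : V => (1:ℝ)) ≠ 0 := by
    intro hcontra
    have := congrFun hcontra (Classical.arbitrary V)
    norm_num at this
  have hkerdim : Module.finrank ℝ (LinearMap.ker L) = 1 := by
    rw [hker]
    exact finrank_span_singleton hone
  have hSsurj : Function.Surjective S := by
    intro r
    refine ⟨fun _ => r / (Fintype.card V : ℝ), ?_⟩
    have hcard : (Fintype.card V : ℝ) ≠ 0 := by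
      exact_mod_cast Fintype.card_ne_zero
    show ∑ _x : V, r / (Fintype.card V : ℝ) = r
    rw [Finset.sum_const, Finset.card_univ, nsmul_eq_mul, mul_div_cancel₀ _ hcard]
  have hSrange : LinearMap.range S = ⊤ := LinearMap.range_eq_top.mpr hSsurj
  have hdim : Module.finrank ℝ (V → ℝ) = Fintype.card V := Module.finrank_pi ℝ
  have hrk1 := LinearMap.finrank_range_add_finrank_ker L
  have hrk2 := LinearMap.finrank_range_add_finrank_ker S
  have hrangeS : Module.finrank ℝ (LinearMap.range S) = 1 := by
    rw [hSrange]; simp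
  have hle : LinearMap.range L ≤ LinearMap.ker S := by
    rintro x ⟨f, rfl⟩
    rw [LinearMap.mem_ker]
    exact sum_lap hrow hrev f
  have heq : LinearMap.range L = LinearMap.ker S := by
    refine Submodule.eq_of_le_of_finrank_le hle ?_
    have e1 : Module.finrank ℝ (LinearMap.range L) + 1 = Fintype.card V := by
      rw [← hkerdim]; rw [hdim] at hrk1; exact hrk1
    have e2 : Module.finrank ℝ (LinearMap.ker S) + 1 = Fintype.card V := by
      have := hrk2
      rw [hdim, hrangeS] at this
      omega
    omega
  have hbmem : b ∈ LinearMap.ker S := by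
    rw [LinearMap.mem_ker]; exact hb
  rw [← heq] at hbmem
  obtain ⟨w, hw⟩ := hbmem
  exact ⟨w, fun x => congrFun hw x⟩

lemma sum_mul_dipole (g : V → ℝ) (a b : V) :
    ∑ x, g x * ((if x = a then (1:ℝ) else 0) - (if x = b then 1 else 0))
      = g a - g b := by
  simp only [mul_sub, mul_ite, mul_one, mul_zero]
  rw [Finset.sum_sub_distrib]
  simp [Finset.sum_ite_eq', Finset.mem_univ]

lemma energy_add (hrow : ∀ x, ∑ y, p x y = 1)
    (hrev : ∀ x y, μ x * p x y = μ y * p y x) (f g : V → ℝ) :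
    chainEnergy p μ (fun u => f u + g u)
      = chainEnergy p μ f + chainEnergy p μ g + 2 * ∑ x, g x * lap p μ f x := by
  rw [energy_eq hrow hrev (fun u => f u + g u), energy_eq hrow hrev f,
    energy_eq hrow hrev g]
  simp only [lap_add]
  have h : ∀ x, (f x + g x) * (lap p μ f x + lap p μ g x)
      = f x * lap p μ f x + g x * lap p μ g x
        + (f x * lap p μ g x + g x * lap p μ f x) := fun x => by ring
  simp_rw [h, Finset.sum_add_distrib]
  rw [lap_symm hrev f g]
  ring

lemma effRes_eq (hnn : ∀ x y, 0 ≤ p x y) (hrow : ∀ x, ∑ y, p x y = 1)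
    (hμpos : ∀ x, 0 < μ x) (hrev : ∀ x y, μ x * p x y = μ y * p y x)
    (hirr : ∀ x y, ∃ t : ℕ, 0 < ((Matrix.of p) ^ t) x y)
    (a b : V) (hab : a ≠ b) (w : V → ℝ)
    (hw : ∀ x, lap p μ w x = (if x = a then 1 else 0) - (if x = b then 1 else 0)) :
    chainEffRes p μ a b = w a - w b ∧ 0 < w a - w b := by
  set R := w a - w b with hRdef
  have hEw : chainEnergy p μ w = R := by
    rw [energy_eq hrow hrev w]
    simp_rw [hw]
    exact sum_mul_dipole w a b
  have hRnn : 0 ≤ R := hEw ▸ energy_nonneg hnn hμpos w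
  have hRpos : 0 < R := by
    rcases hRnn.lt_or_eq with hlt | heq0
    · exact hlt
    · exfalso
      have hconst := const_of_energy_zero hnn hμpos hirr w (by rw [hEw, ← heq0])
      have h1 : lap p μ w a = 1 := by
        rw [hw a]
        simp [hab]
      have h2 : lap p μ w a = 0 := by
        have hwc : w = fun _ => w a := funext fun x => hconst x a
        rw [hwc] at h1 ⊢
        exact lap_const hrow (w a) a
      rw [h1] at h2; norm_num at h2
  refine ⟨?_, hRpos⟩
  set ψ : V → ℝ := fun u => (w u - w b) / R with hψdef
  have hψa : ψ a = 1 := by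
    show (w a - w b) / R = 1
    rw [← hRdef, div_self hRpos.ne']
  have hψb : ψ b = 0 := by
    show (w b - w b) / R = 0
    rw [sub_self, zero_div]
  have hlapψ : ∀ x, lap p μ ψ x
      = ((if x = a then 1 else 0) - (if x = b then 1 else 0)) / R := by
    intro x
    have hψ2 : ψ = fun u => (1/R) * ((fun v => w v - w b) u) := by
      funext u; show (w u - w b) / R = _; ring
    rw [hψ2, lap_smul, lap_sub_const hrow, hw x]; ring
  have dipole_div : ∀ g : V → ℝ,
      ∑ x, g x * (((if x = a then (1:ℝ) else 0) - (if x = b then 1 else 0)) / R)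
        = (g a - g b) / R := by
    intro g
    simp_rw [← mul_div_assoc]
    rw [← Finset.sum_div, sum_mul_dipole]
  have hEψ : chainEnergy p μ ψ = 1/R := by
    rw [energy_eq hrow hrev]
    simp_rw [hlapψ]
    rw [dipole_div, hψa, hψb]
    ring
  have key : ∀ f : V → ℝ, f a = 1 → f b = 0 → 1/R ≤ chainEnergy p μ f := by
    intro f hfa hfb
    have hfd : chainEnergy p μ f = chainEnergy p μ (fun u => ψ u + (f u - ψ u)) := by
      congr 1; funext u; ring
    rw [hfd, energy_add hrow hrev]
    have cross : ∑ x, (f x - ψ x) * lap p μ ψ x = 0 := by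
      simp_rw [hlapψ]
      rw [dipole_div (fun x => f x - ψ x)]
      rw [hfa, hfb, hψa, hψb]
      norm_num
    rw [hEψ, cross]
    have := energy_nonneg hnn hμpos (fun u => f u - ψ u)
    linarith
  have hmem : (1/R) ∈ chainEnergy p μ '' {f : V → ℝ | f a = 1 ∧ f b = 0} :=
    ⟨ψ, ⟨hψa, hψb⟩, hEψ⟩
  have hlb : ∀ r ∈ chainEnergy p μ '' {f : V → ℝ | f a = 1 ∧ f b = 0}, 1/R ≤ r := by
    rintro r ⟨f, ⟨hfa, hfb⟩, rfl⟩
    exact key f hfa hfb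
  have hsinf : sInf (chainEnergy p μ '' {f : V → ℝ | f a = 1 ∧ f b = 0}) = 1/R :=
    le_antisymm (csInf_le ⟨1/R, hlb⟩ hmem) (le_csInf ⟨_, hmem⟩ hlb)
  rw [chainEffRes, hsinf, one_div, inv_inv]

lemma effRes_self (a : V) : chainEffRes p μ a a = 0 := by
  have hset : {f : V → ℝ | f a = 1 ∧ f a = 0} = ∅ := by
    ext f
    simp only [Set.mem_setOf_eq, Set.mem_empty_iff_false, iff_false, not_and]
    intro h1 h2
    rw [h1] at h2
    norm_num at h2
  rw [chainEffRes, hset, Set.image_empty, Real.sInf_empty, inv_zero]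

end TetaliAux

open TetaliAux in
/-- Tetali's hitting time formula: for a reversible Markov chain with reversing
measure `μ` and conductances `c_{x,y} = μ(x)p(x,y)`, the expected hitting time
satisfies `E_v(τ_z) = (1/2) ∑_u μ(u)[R(v ↔ z) + R(z ↔ u) − R(u ↔ v)]`.
Here `h z y = E_y(τ_z)` is characterized by the usual hitting time system. -/
theorem tetali_hitting_time_formula
    {V : Type*} [Fintype V] [DecidableEq V] [Nonempty V]
    (p : V → V → ℝ) (μ : V → ℝ)
    (hnn : ∀ x y, 0 ≤ p x y) (hrow : ∀ x, ∑ y, p x y = 1)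
    (hμpos : ∀ x, 0 < μ x)
    (hrev : ∀ x y, μ x * p x y = μ y * p y x)
    (hirr : ∀ x y, ∃ t : ℕ, 0 < ((Matrix.of p) ^ t) x y)
    (h : V → V → ℝ)
    (hzz : ∀ z, h z z = 0)
    (hrec : ∀ z y, y ≠ z → h z y = 1 + ∑ w, p y w * h z w) :
    ∀ v z : V, h z v =
      (1 / 2) * ∑ u, μ u *
        (chainEffRes p μ v z + chainEffRes p μ z u - chainEffRes p μ u v) := by
  intro v z
  classical
  have exg : ∀ a : V, ∃ g : V → ℝ, g z = 0 ∧
      ∀ x, lap p μ g x = (if x = a then 1 else 0) - (if x = z then 1 else 0) := by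
    intro a
    have hbsum : ∑ x, ((if x = a then (1:ℝ) else 0) - (if x = z then 1 else 0)) = 0 := by
      rw [Finset.sum_sub_distrib]
      simp
    obtain ⟨w, hw⟩ := lap_surj hnn hrow hμpos hrev hirr _ hbsum
    refine ⟨fun u => w u - w z, by simp, fun x => ?_⟩
    rw [lap_sub_const hrow]
    exact hw x
  choose g hg0 hgl using exg
  have hgz : ∀ x, g z x = 0 := by
    have hE : chainEnergy p μ (g z) = 0 := by
      rw [energy_eq hrow hrev]
      apply Finset.sum_eq_zero
      intro x _
      rw [hgl z x]
      simp
    intro x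
    have := const_of_energy_zero hnn hμpos hirr (g z) hE x z
    rw [this, hg0 z]
  have recip : ∀ a c : V, g a c = g c a := by
    intro a c
    have h1 : ∑ x, g a x * lap p μ (g c) x = g a c := by
      simp_rw [hgl c]
      rw [sum_mul_dipole, hg0 a, sub_zero]
    have h2 : ∑ x, g c x * lap p μ (g a) x = g c a := by
      simp_rw [hgl a]
      rw [sum_mul_dipole, hg0 c, sub_zero]
    rw [← h1, lap_symm hrev, h2]
  have res_vz : ∀ a : V, a ≠ z → chainEffRes p μ a z = g a a := by
    intro a ha
    have := (effRes_eq hnn hrow hμpos hrev hirr a z ha (g a) (hgl a)).1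
    rw [this, hg0 a, sub_zero]
  have res_zu : ∀ a : V, a ≠ z → chainEffRes p μ z a = g a a := by
    intro a ha
    have hwneg : ∀ x, lap p μ (fun u => (-1) * g a u) x
        = (if x = z then 1 else 0) - (if x = a then 1 else 0) := by
      intro x
      rw [lap_smul, hgl a x]
      ring
    have := (effRes_eq hnn hrow hμpos hrev hirr z a (Ne.symm ha) _ hwneg).1
    rw [this, hg0 a]
    ring
  have res_uv : ∀ a c : V, a ≠ c →
      chainEffRes p μ a c = g a a - g c a - g a c + g c c := by
    intro a c hac
    have hwd : ∀ x, lap p μ (fun u => g a u + (-1) * g c u) x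
        = (if x = a then 1 else 0) - (if x = c then 1 else 0) := by
      intro x
      rw [lap_add, lap_smul, hgl a x, hgl c x]
      ring
    have := (effRes_eq hnn hrow hμpos hrev hirr a c hac _ hwd).1
    rw [this]
    ring
  set H : V → ℝ := fun x => ∑ u, μ u * g u x with hH
  have hHz : H z = 0 := by
    rw [hH]
    simp only
    apply Finset.sum_eq_zero
    intro u _
    rw [hg0 u, mul_zero]
  have hHrec : ∀ y, y ≠ z → H y = 1 + ∑ w, p y w * H w := by
    intro y hy
    have hlH : lap p μ H y = μ y := by
      rw [hH, lap_weighted_sum]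
      simp_rw [hgl]
      simp [hy]
    have h2 : μ y * (H y - ∑ w, p y w * H w) = μ y := hlH
    have h3 : H y - ∑ w, p y w * H w = 1 :=
      mul_left_cancel₀ (hμpos y).ne' (h2.trans (mul_one (μ y)).symm)
    linarith
  have hhH : ∀ x, h z x = H x := by
    set d : V → ℝ := fun x => h z x - H x with hd
    have hdz : d z = 0 := by
      rw [hd]; simp only
      rw [hzz, hHz, sub_zero]
    have hdrec : ∀ y, y ≠ z → lap p μ d y = 0 := by
      intro y hy
      show μ y * (d y - ∑ w, p y w * d w) = 0
      have e1 : ∑ w, p y w * d w = (∑ w, p y w * h z w) - ∑ w, p y w * H w := by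
        rw [hd]
        simp only [mul_sub]
        rw [Finset.sum_sub_distrib]
      have e2 := hrec z y hy
      have e3 := hHrec y hy
      have e4 : d y = h z y - H y := rfl
      have e5 : d y - ∑ w, p y w * d w = 0 := by
        rw [e4, e1]
        linarith
      rw [e5, mul_zero]
    have hE : chainEnergy p μ d = 0 := by
      rw [energy_eq hrow hrev]
      apply Finset.sum_eq_zero
      intro x _
      by_cases hx : x = z
      · subst hx
        rw [hdz, zero_mul]
      · rw [hdrec x hx, mul_zero]
    have hc := const_of_energy_zero hnn hμpos hirr d hE
    intro x
    have hx0 : d x = 0 := (hc x z).trans hdz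
    have hx1 : h z x - H x = 0 := hx0
    linarith
  have main : ∀ u, chainEffRes p μ v z + chainEffRes p μ z u - chainEffRes p μ u v
      = 2 * g u v := by
    intro u
    by_cases hvz : v = z
    · subst hvz
      by_cases huv : u = v
      · subst huv
        rw [effRes_self, hgz]
        ring
      · rw [effRes_self, res_zu u huv, res_vz u huv, hg0 u]
        ring
    · by_cases huz : u = z
      · subst huz
        rw [effRes_self, res_vz v hvz, res_zu v hvz, hgz v]
        ring
      · by_cases huv : u = v
        · subst huv
          rw [res_vz u hvz, res_zu u hvz, effRes_self]
          ring
        · rw [res_vz v hvz, res_zu u huz, res_uv u v huv, recip v u]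
          ring
  rw [hhH v, hH]
  simp only
  rw [Finset.mul_sum]
  refine Finset.sum_congr rfl fun u _ => ?_
  rw [main u]
  ring
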